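/- arXiv:2008.03006 — 7 statements merged into one kernel-verified Lean document; each statement's English description precedes it below -/
import Mathlib

section
/- Let n, k ≥ 1 be integers, let C : [n]^k → ℝ be a cost tensor, and let μ_1, …, μ_k ∈ Δ_n. Then there exists P in the transportation polytope M(μ_1,…,μ_k) that minimizes ⟨P, C⟩ := Σ_{j ∈ [n]^k} P_j C_j over M(μ_1,…,μ_k) and whose support {j ∈ [n]^k : P_j ≠ 0} has cardinality at most nk − k + 1. -/
/-- The transportation polytope `M(μ_1, …, μ_k)`: entrywise nonnegative tensors
`P : [n]^k → ℝ` whose `i`-th marginal equals `μ i` for every `i`. -/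
def transportPolytope (n k : ℕ) (μ : Fin k → Fin n → ℝ) :
    Set ((Fin k → Fin n) → ℝ) :=
  {P | (∀ j, 0 ≤ P j) ∧
    ∀ (i : Fin k) (t : Fin n),
      ∑ j ∈ Finset.univ.filter (fun j : Fin k → Fin n => j i = t), P j = μ i t}

/-!
A minimizer exists since the polytope is compact; take one, `P`, of smallest support. If the
support were larger than the rank of the marginal map, some nonzero `D` supported in `supp P`
would have zero marginals. Then `D` and `-D` have total mass zero, so both have negative entries,
and moving from `P` along whichever of them does not increase the cost until a coordinate hits
zero gives a minimizer of smaller support. The marginal map has rank at most `nk - k + 1` because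
all `k` marginals of a tensor have the same total mass.
-/

open Finset Function
open Module (finrank)

section StandardFormLP

variable {ι V : Type*} [Fintype ι] [AddCommGroup V] [Module ℝ V]

def feasibleRegion (A : (ι → ℝ) →ₗ[ℝ] V) (b : V) : Set (ι → ℝ) :=
  {x | 0 ≤ x ∧ A x = b}

lemma exists_lt_zero_of_sum_eq_zero {d : ι → ℝ} (hd : d ≠ 0) (hsum : ∑ j, d j = 0) :
    ∃ j, d j < 0 := by
  by_contra! h
  exact hd ((Fintype.sum_eq_zero_iff_of_nonneg h).1 hsum)

/-- The ratio test of the simplex method. -/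
lemma exists_support_add_smul_ssubset {x d : ι → ℝ} (hx : 0 ≤ x) (hneg : ∃ j, d j < 0)
    (hsupp : support d ⊆ support x) :
    ∃ t : ℝ, 0 ≤ t ∧ 0 ≤ x + t • d ∧ support (x + t • d) ⊂ support x := by
  classical
  obtain ⟨j₀, hj₀, hmin⟩ := (univ.filter fun j => d j < 0).exists_min_image
    (fun j => x j / -d j) (by simpa [filter_nonempty_iff] using hneg)
  simp only [mem_filter, mem_univ, true_and] at hj₀ hmin
  set t := x j₀ / -d j₀
  have ht : 0 ≤ t := div_nonneg (hx j₀) (neg_nonneg.2 hj₀.le)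
  have hnonneg : 0 ≤ x + t • d := by
    intro j
    simp only [Pi.add_apply, Pi.smul_apply, smul_eq_mul, Pi.zero_apply]
    rcases lt_or_ge (d j) 0 with hj | hj
    · have := (le_div_iff₀ (neg_pos.2 hj)).1 (hmin j hj)
      linarith
    · exact add_nonneg (hx j) (mul_nonneg ht hj)
  have hsub : support (x + t • d) ⊆ support x :=
    (support_add _ _).trans <|
      Set.union_subset subset_rfl ((support_const_smul_subset t d).trans hsupp)
  refine ⟨t, ht, hnonneg, (Set.ssubset_iff_of_subset hsub).2 ⟨j₀, hsupp hj₀.ne, ?_⟩⟩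
  rw [notMem_support]
  simp only [Pi.add_apply, Pi.smul_apply, smul_eq_mul, t]
  field_simp [hj₀.ne]
  ring

lemma IsMinOn.exists_support_ssubset {A : (ι → ℝ) →ₗ[ℝ] V} {b : V} {c x d : ι → ℝ}
    (hx : x ∈ feasibleRegion A b) (hmin : IsMinOn (· ⬝ᵥ c) (feasibleRegion A b) x)
    (hd : d ≠ 0) (hAd : A d = 0) (hsum : ∑ j, d j = 0) (hsupp : support d ⊆ support x) :
    ∃ y ∈ feasibleRegion A b, IsMinOn (· ⬝ᵥ c) (feasibleRegion A b) y ∧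
      support y ⊂ support x := by
  obtain ⟨e, he, hAe, hce, hsuppe⟩ : ∃ e : ι → ℝ,
      (∃ j, e j < 0) ∧ A e = 0 ∧ e ⬝ᵥ c ≤ 0 ∧ support e ⊆ support x := by
    rcases le_total (d ⬝ᵥ c) 0 with h | h
    · exact ⟨d, exists_lt_zero_of_sum_eq_zero hd hsum, hAd, h, hsupp⟩
    · refine ⟨-d, exists_lt_zero_of_sum_eq_zero (neg_ne_zero.2 hd) (by simp [hsum]),
        by simp [hAd], by simpa using h, by simpa using hsupp⟩
  obtain ⟨t, ht, hnonneg, hssub⟩ := exists_support_add_smul_ssubset hx.1 he hsuppe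
  have hcost : (x + t • e) ⬝ᵥ c ≤ x ⬝ᵥ c := by
    rw [add_dotProduct, smul_dotProduct, smul_eq_mul]
    nlinarith
  exact ⟨x + t • e, ⟨hnonneg, by simp [hx.2, hAe]⟩, fun z hz => hcost.trans (hmin hz), hssub⟩

lemma exists_ne_zero_map_eq_zero_support_subset (A : (ι → ℝ) →ₗ[ℝ] V) (s : Set ι)
    (hs : finrank ℝ (LinearMap.range A) < s.ncard) :
    ∃ d ≠ 0, A d = 0 ∧ support d ⊆ s := by
  classical
  set E := ExtendByZero.linearMap ℝ ((↑) : s → ι)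
  have hE : ∀ (g : s → ℝ) (a : s), E g a = g a :=
    fun g a => Subtype.val_injective.extend_apply _ _ _
  have hnotinj : ¬ Injective (A ∘ₗ E) := by
    intro hinj
    have := (LinearMap.finrank_range_of_inj hinj).symm.trans_le
      (Submodule.finrank_mono (LinearMap.range_comp_le_range E A))
    rw [Module.finrank_fintype_fun_eq_card, ← Nat.card_eq_fintype_card,
      Nat.card_coe_set_eq] at this
    omega
  obtain ⟨g, hAg, hg⟩ := not_forall₂.1 ((injective_iff_map_eq_zero _).not.1 hnotinj)
  refine ⟨E g, fun h => hg (funext fun a => by rw [← hE g a, h]; rfl), hAg, ?_⟩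
  intro j hj
  by_contra hjs
  exact hj (extend_apply' _ _ _ fun ⟨a, ha⟩ => hjs (ha ▸ a.2))

theorem exists_isMinOn_ncard_support_le_finrank_range (A : (ι → ℝ) →ₗ[ℝ] V) (b : V)
    (c : ι → ℝ) (hA : ∀ d, A d = 0 → ∑ j, d j = 0)
    (h : ∃ x ∈ feasibleRegion A b, IsMinOn (· ⬝ᵥ c) (feasibleRegion A b) x) :
    ∃ x ∈ feasibleRegion A b, IsMinOn (· ⬝ᵥ c) (feasibleRegion A b) x ∧
      (support x).ncard ≤ finrank ℝ (LinearMap.range A) := by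
  set M : Set (ι → ℝ) :=
    {x | x ∈ feasibleRegion A b ∧ IsMinOn (· ⬝ᵥ c) (feasibleRegion A b) x}
  set x := argminOn (fun x => (support x).ncard) M h
  obtain ⟨hx, hxmin⟩ : x ∈ M := argminOn_mem _ _ h
  refine ⟨x, hx, hxmin, not_lt.1 fun hlt => ?_⟩
  obtain ⟨d, hd, hAd, hsupp⟩ := exists_ne_zero_map_eq_zero_support_subset A _ hlt
  obtain ⟨y, hy, hymin, hssub⟩ := hxmin.exists_support_ssubset hx hd hAd (hA d hAd) hsupp
  exact not_lt_argminOn (fun x => (support x).ncard) M ⟨hy, hymin⟩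
    (Set.ncard_lt_ncard hssub (Set.toFinite _))

end StandardFormLP

section MassDefect

variable (ι β : Type*) [Fintype β]

/-- The `|ι| - 1` linear relations satisfied by every family of marginals of a tensor. -/
def massDefect (i₀ : ι) : (ι → β → ℝ) →ₗ[ℝ] {i // i ≠ i₀} → ℝ where
  toFun v i := ∑ t, v i t - ∑ t, v i₀ t
  map_add' v w := by ext i; simp [sum_add_distrib]; ring
  map_smul' a v := by ext i; simp [mul_sum, mul_sub]

lemma massDefect_surjective [Nonempty β] (i₀ : ι) : Surjective (massDefect ι β i₀) := by
  classical
  intro w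
  refine ⟨fun i _ => if h : i = i₀ then 0 else w ⟨i, h⟩ / Fintype.card β, ?_⟩
  ext ⟨i, hi⟩
  simp [massDefect, hi, mul_div_cancel₀, Fintype.card_ne_zero]

end MassDefect

section Marginal

variable (ι β : Type*) [Fintype ι] [DecidableEq ι] [Fintype β] [DecidableEq β]

def marginal : ((ι → β) → ℝ) →ₗ[ℝ] ι → β → ℝ where
  toFun P i t := ∑ j ∈ univ.filter (fun j : ι → β => j i = t), P j
  map_add' P Q := by ext i t; simp [sum_add_distrib]
  map_smul' a P := by ext i t; simp [mul_sum]

variable {ι β}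

lemma sum_marginal (P : (ι → β) → ℝ) (i : ι) : ∑ t, marginal ι β P i t = ∑ j, P j :=
  sum_fiberwise univ (fun j => j i) P

lemma sum_eq_zero_of_marginal_eq_zero [Nonempty ι] {d : (ι → β) → ℝ}
    (hd : marginal ι β d = 0) : ∑ j, d j = 0 := by
  obtain ⟨i⟩ := ‹Nonempty ι›
  simp [← sum_marginal d i, hd]

lemma marginal_prod {μ : ι → β → ℝ} (hμ : ∀ i, ∑ t, μ i t = 1) :
    marginal ι β (fun j => ∏ i, μ i (j i)) = μ := by
  ext i t
  change ∑ j ∈ univ.filter (fun j : ι → β => j i = t), ∏ i, μ i (j i) = μ i t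
  rw [← Fintype.piFinset_univ,
    ← Fintype.piFinset_update_singleton_eq_filter_piFinset_eq (fun _ => univ) i (mem_univ t),
    ← prod_univ_sum, prod_eq_single i]
  · simp
  · intro i' _ hi'
    simp [update_of_ne hi', hμ i']
  · simp

lemma isCompact_feasibleRegion_marginal [Nonempty ι] (μ : ι → β → ℝ) :
    IsCompact (feasibleRegion (marginal ι β) μ) := by
  obtain ⟨i₀⟩ := ‹Nonempty ι›
  have hclosed : IsClosed (feasibleRegion (marginal ι β) μ) :=
    (isClosed_le continuous_const continuous_id).inter
      (isClosed_eq (marginal ι β).continuous_of_finiteDimensional continuous_const)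
  refine (isCompact_univ_pi fun j =>
    isCompact_Icc (a := 0) (b := μ i₀ (j i₀))).of_isClosed_subset hclosed ?_
  rintro P ⟨hP, hPμ⟩ j -
  refine ⟨hP j, ?_⟩
  rw [← hPμ]
  exact single_le_sum (fun j' _ => hP j') (mem_filter.2 ⟨mem_univ j, rfl⟩)

variable (ι β)

lemma range_marginal_le_ker_massDefect (i₀ : ι) :
    LinearMap.range (marginal ι β) ≤ LinearMap.ker (massDefect ι β i₀) := by
  rintro _ ⟨P, rfl⟩
  ext i
  simp [massDefect, sum_marginal]

lemma finrank_range_marginal_le [Nonempty ι] [Nonempty β] :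
    finrank ℝ (LinearMap.range (marginal ι β)) ≤
      Fintype.card β * Fintype.card ι - Fintype.card ι + 1 := by
  obtain ⟨i₀⟩ := ‹Nonempty ι›
  have hrank := (massDefect ι β i₀).finrank_range_add_finrank_ker
  rw [LinearMap.range_eq_top.2 (massDefect_surjective ι β i₀), finrank_top] at hrank
  have hdom : finrank ℝ (ι → β → ℝ) = Fintype.card β * Fintype.card ι := by
    rw [Module.finrank_pi_fintype]; simp [Nat.mul_comm]
  have hcod : finrank ℝ ({i // i ≠ i₀} → ℝ) = Fintype.card ι - 1 := by simp
  have hle := Submodule.finrank_mono (range_marginal_le_ker_massDefect ι β i₀)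
  have hι : 0 < Fintype.card ι := Fintype.card_pos
  have hιβ : Fintype.card ι ≤ Fintype.card β * Fintype.card ι :=
    Nat.le_mul_of_pos_left _ Fintype.card_pos
  omega

end Marginal

lemma transportPolytope_eq_feasibleRegion (n k : ℕ) (μ : Fin k → Fin n → ℝ) :
    transportPolytope n k μ = feasibleRegion (marginal (Fin k) (Fin n)) μ := by
  ext P
  simp [transportPolytope, feasibleRegion, Pi.le_def, funext_iff, marginal]

/-- There is a minimizer of `⟨P, C⟩` over the transportation polytope whose support
has at most `nk - k + 1` nonzero entries. -/
theorem sparse_solutions_for_MOT (n k : ℕ) (hn : 1 ≤ n) (hk : 1 ≤ k)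
    (C : (Fin k → Fin n) → ℝ) (μ : Fin k → Fin n → ℝ)
    (hμ : ∀ i : Fin k, (∀ t, 0 ≤ μ i t) ∧ ∑ t : Fin n, μ i t = 1) :
    ∃ P ∈ transportPolytope n k μ,
      (∀ Q ∈ transportPolytope n k μ, ∑ j, P j * C j ≤ ∑ j, Q j * C j) ∧
      Set.ncard {j : Fin k → Fin n | P j ≠ 0} ≤ n * k - k + 1 := by
  have : Nonempty (Fin n) := ⟨⟨0, hn⟩⟩
  have : Nonempty (Fin k) := ⟨⟨0, hk⟩⟩
  have hne : (feasibleRegion (marginal (Fin k) (Fin n)) μ).Nonempty :=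
    ⟨_, fun j => prod_nonneg fun i _ => (hμ i).1 _, marginal_prod fun i => (hμ i).2⟩
  obtain ⟨P₀, hP₀, hP₀min⟩ := (isCompact_feasibleRegion_marginal μ).exists_isMinOn hne
    (continuous_id.dotProduct continuous_const).continuousOn
  obtain ⟨P, hP, hPmin, hcard⟩ := exists_isMinOn_ncard_support_le_finrank_range _ μ C
    (fun _ => sum_eq_zero_of_marginal_eq_zero) ⟨P₀, hP₀, hP₀min⟩
  rw [transportPolytope_eq_feasibleRegion]
  refine ⟨P, hP, fun Q hQ => hPmin hQ, hcard.trans ?_⟩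
  simpa using finrank_range_marginal_le (Fin k) (Fin n)
end

section
/- Let n, k ≥ 1 be integers, C : [n]^k → ℝ, μ_1, …, μ_k ∈ Δ_n, ε > 0, and η ≥ ε^{−1} k log n. Let MOT* := min_{Q ∈ M(μ_1,…,μ_k)} ⟨C, Q⟩ and RMOT* := min_{Q ∈ M(μ_1,…,μ_k)} (⟨C, Q⟩ − η^{−1} H(Q)). Then for any P ∈ M(μ_1,…,μ_k): if ⟨C, P⟩ − η^{−1} H(P) ≤ RMOT* + ε then ⟨C, P⟩ ≤ MOT* + 2ε; and conversely, if ⟨C, P⟩ ≤ MOT* + ε then ⟨C, P⟩ − η^{−1} H(P) ≤ RMOT* + 2ε. -/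
/-- Shannon entropy `H(P) = -∑_j P_j log P_j` (with the convention `0 log 0 = 0`,
automatic since `Real.log 0 = 0`). -/
noncomputable def shannonEntropy (n k : ℕ) (P : (Fin k → Fin n) → ℝ) : ℝ :=
  -∑ j : Fin k → Fin n, P j * Real.log (P j)

open Real Finset

theorem sum_negMulLog_le_log_card {ι : Type*} [Fintype ι] {p : ι → ℝ} (h0 : ∀ i, 0 ≤ p i)
    (h1 : ∑ i, p i = 1) : ∑ i, negMulLog (p i) ≤ log (Fintype.card ι) := by
  obtain ⟨i, -, -⟩ := exists_ne_zero_of_sum_ne_zero (h1 ▸ one_ne_zero : ∑ i, p i ≠ 0)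
  set N : ℝ := (Fintype.card ι : ℝ)
  have hN : 0 < N := Nat.cast_pos.2 (Fintype.card_pos_iff.2 ⟨i⟩)
  have jensen := concaveOn_negMulLog.le_map_sum (t := univ) (w := fun _ => N⁻¹) (p := p)
    (fun _ _ => by positivity) (by simp [N, hN.ne']) (fun i _ => Set.mem_Ici.2 (h0 i))
  simp only [smul_eq_mul, ← mul_sum, h1, mul_one, negMulLog, log_inv, neg_mul_neg] at jensen
  rwa [inv_mul_le_iff₀ hN, mul_inv_cancel_left₀ hN.ne'] at jensen

theorem shannonEntropy_eq_sum_negMulLog (n k : ℕ) (P : (Fin k → Fin n) → ℝ) :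
    shannonEntropy n k P = ∑ j, negMulLog (P j) := by
  simp [shannonEntropy, negMulLog_eq_neg]

theorem neg_sum_abs_le_sum_mul {ι : Type*} [Fintype ι] (C : ι → ℝ) {Q : ι → ℝ}
    (hQ : ∀ i, |Q i| ≤ 1) : -∑ i, |C i| ≤ ∑ i, C i * Q i := by
  rw [neg_le, ← sum_neg_distrib]
  refine sum_le_sum fun i _ => (neg_le_abs _).trans ?_
  rw [abs_mul]
  exact mul_le_of_le_one_right (abs_nonneg _) (hQ i)

namespace transportPolytope

variable {n k : ℕ} {μ : Fin k → Fin n → ℝ} {Q : (Fin k → Fin n) → ℝ}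

theorem sum_eq_sum_marginal (hQ : Q ∈ transportPolytope n k μ) (i : Fin k) :
    ∑ j, Q j = ∑ t, μ i t := by
  rw [← sum_fiberwise univ (fun j => j i) Q]
  exact sum_congr rfl fun t _ => hQ.2 i t

variable {i : Fin k}

theorem abs_le_one (hQ : Q ∈ transportPolytope n k μ) (hμ : ∑ t, μ i t = 1)
    (j : Fin k → Fin n) : |Q j| ≤ 1 := by
  rw [abs_of_nonneg (hQ.1 j), ← hμ, ← sum_eq_sum_marginal hQ i]
  exact single_le_sum (fun j _ => hQ.1 j) (mem_univ j)

theorem shannonEntropy_nonneg (hQ : Q ∈ transportPolytope n k μ) (hμ : ∑ t, μ i t = 1) :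
    0 ≤ shannonEntropy n k Q := by
  rw [shannonEntropy_eq_sum_negMulLog]
  exact sum_nonneg fun j _ =>
    negMulLog_nonneg (hQ.1 j) ((le_abs_self _).trans (abs_le_one hQ hμ j))

theorem shannonEntropy_le (hQ : Q ∈ transportPolytope n k μ) (hμ : ∑ t, μ i t = 1) :
    shannonEntropy n k Q ≤ k * log n := by
  rw [shannonEntropy_eq_sum_negMulLog, ← log_pow]
  simpa using sum_negMulLog_le_log_card hQ.1 ((sum_eq_sum_marginal hQ i).trans hμ)

end transportPolytope

section InfPerturbation

variable {α : Type*} {s : Set α} {f g : α → ℝ} {δ : ℝ}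

theorem bddBelow_image_sub (hf : BddBelow (f '' s)) (hg : ∀ x ∈ s, g x ≤ δ) :
    BddBelow ((fun x => f x - g x) '' s) := by
  obtain ⟨b, hb⟩ := hf
  refine ⟨b - δ, ?_⟩
  rintro _ ⟨x, hx, rfl⟩
  linarith [hb (Set.mem_image_of_mem f hx), hg x hx]

theorem csInf_image_sub_le (hs : s.Nonempty) (hf : BddBelow (f '' s))
    (hg0 : ∀ x ∈ s, 0 ≤ g x) (hgδ : ∀ x ∈ s, g x ≤ δ) :
    sInf ((fun x => f x - g x) '' s) ≤ sInf (f '' s) := by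
  refine le_csInf (hs.image f) ?_
  rintro _ ⟨x, hx, rfl⟩
  have := csInf_le (bddBelow_image_sub hf hgδ) (Set.mem_image_of_mem (fun x => f x - g x) hx)
  linarith [hg0 x hx]

theorem csInf_image_le_csInf_image_sub_add (hs : s.Nonempty) (hf : BddBelow (f '' s))
    (hg : ∀ x ∈ s, g x ≤ δ) :
    sInf (f '' s) ≤ sInf ((fun x => f x - g x) '' s) + δ := by
  rw [← sub_le_iff_le_add]
  refine le_csInf (hs.image _) ?_
  rintro _ ⟨x, hx, rfl⟩
  have := csInf_le hf (Set.mem_image_of_mem f hx)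
  linarith [hg x hx]

end InfPerturbation

theorem MOT_RMOT_close_general (n k : ℕ) (hk : 1 ≤ k)
    (C : (Fin k → Fin n) → ℝ) (μ : Fin k → Fin n → ℝ)
    (hμ : ∀ i : Fin k, (∀ t, 0 ≤ μ i t) ∧ ∑ t : Fin n, μ i t = 1)
    (ε η : ℝ) (hε : 0 < ε) (hη : ε⁻¹ * k * Real.log n ≤ η)
    (MOTstar RMOTstar : ℝ)
    (hMOT : MOTstar =
      sInf {v : ℝ | ∃ Q ∈ transportPolytope n k μ, v = ∑ j, C j * Q j})
    (hRMOT : RMOTstar =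
      sInf {v : ℝ | ∃ Q ∈ transportPolytope n k μ,
        v = (∑ j, C j * Q j) - η⁻¹ * shannonEntropy n k Q})
    (P : (Fin k → Fin n) → ℝ) (hP : P ∈ transportPolytope n k μ) :
    ((∑ j, C j * P j) - η⁻¹ * shannonEntropy n k P ≤ RMOTstar + ε →
      ∑ j, C j * P j ≤ MOTstar + 2 * ε) ∧
    (∑ j, C j * P j ≤ MOTstar + ε →
      (∑ j, C j * P j) - η⁻¹ * shannonEntropy n k P ≤ RMOTstar + 2 * ε) := by
  set s := transportPolytope n k μ
  set cost := fun Q : (Fin k → Fin n) → ℝ => ∑ j, C j * Q j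
  set reg := fun Q : (Fin k → Fin n) → ℝ => η⁻¹ * shannonEntropy n k Q
  have hμ₀ := (hμ ⟨0, hk⟩).2
  have hη₀ : 0 ≤ η := (by positivity : 0 ≤ ε⁻¹ * k * log n).trans hη
  have hreg₀ (Q) (hQ : Q ∈ s) : 0 ≤ reg Q :=
    mul_nonneg (inv_nonneg.2 hη₀) (transportPolytope.shannonEntropy_nonneg hQ hμ₀)
  have hregε (Q) (hQ : Q ∈ s) : reg Q ≤ ε := by
    refine inv_mul_le_of_le_mul₀ hη₀ hε.le ?_
    calc shannonEntropy n k Q ≤ k * log n := transportPolytope.shannonEntropy_le hQ hμ₀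
      _ ≤ η * ε := by rwa [mul_assoc, inv_mul_le_iff₀ hε, mul_comm ε] at hη
  have hcost : BddBelow (cost '' s) :=
    ⟨-∑ j, |C j|, by
      rintro _ ⟨Q, hQ, rfl⟩
      exact neg_sum_abs_le_sum_mul C (transportPolytope.abs_le_one hQ hμ₀)⟩
  have hMOT' : MOTstar = sInf (cost '' s) := by simp only [hMOT, Set.image, eq_comm]; rfl
  have hRMOT' : RMOTstar = sInf ((fun Q => cost Q - reg Q) '' s) := by
    simp only [hRMOT, Set.image, eq_comm]; rfl
  have hRM := csInf_image_sub_le ⟨P, hP⟩ hcost hreg₀ hregε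
  have hMR := csInf_image_le_csInf_image_sub_add ⟨P, hP⟩ hcost hregε
  have hP₀ := hreg₀ P hP
  have hPε := hregε P hP
  constructor <;> intro h <;> linarith

/-- `MOT` and `RMOT` are close for large regularization `η ≥ ε⁻¹ k log n`:
an `ε`-approximate solution to the entropically regularized problem is a
`2ε`-approximate solution to the unregularized one, and vice versa. -/
theorem MOT_RMOT_close (n k : ℕ) (hn : 1 ≤ n) (hk : 1 ≤ k)
    (C : (Fin k → Fin n) → ℝ) (μ : Fin k → Fin n → ℝ)
    (hμ : ∀ i : Fin k, (∀ t, 0 ≤ μ i t) ∧ ∑ t : Fin n, μ i t = 1)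
    (ε η : ℝ) (hε : 0 < ε) (hη0 : 0 < η) (hη : ε⁻¹ * k * Real.log n ≤ η)
    (MOTstar RMOTstar : ℝ)
    (hMOT : MOTstar =
      sInf {v : ℝ | ∃ Q ∈ transportPolytope n k μ, v = ∑ j, C j * Q j})
    (hRMOT : RMOTstar =
      sInf {v : ℝ | ∃ Q ∈ transportPolytope n k μ,
        v = (∑ j, C j * Q j) - η⁻¹ * shannonEntropy n k Q})
    (P : (Fin k → Fin n) → ℝ) (hP : P ∈ transportPolytope n k μ) :
    ((∑ j, C j * P j) - η⁻¹ * shannonEntropy n k P ≤ RMOTstar + ε →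
      ∑ j, C j * P j ≤ MOTstar + 2 * ε) ∧
    (∑ j, C j * P j ≤ MOTstar + ε →
      (∑ j, C j * P j) - η⁻¹ * shannonEntropy n k P ≤ RMOTstar + 2 * ε) :=
  MOT_RMOT_close_general n k hk C μ hμ ε η hε hη MOTstar RMOTstar hMOT hRMOT P hP
end

section
/- Let n, k ≥ 1, C : [n]^k → ℝ, and p_1, …, p_k ∈ ℝ^n. Set M := 2·max_{j ∈ [n]^k} |C_j| + 2·Σ_{i=1}^k max_{t ∈ [n]} |[p_i]_t| + 1. For any s ∈ {1,…,k} and any (j'_1,…,j'_s) ∈ [n]^s, define for each i ∈ {1,…,s} the vector q_i ∈ ℝ^n by [q_i]_{j'_i} = [p_i]_{j'_i} and [q_i]_t = −M for t ≠ j'_i. Then min_{j ∈ [n]^k} ( C_j − Σ_{i=1}^s [q_i]_{j_i} − Σ_{i=s+1}^k [p_i]_{j_i} ) = min over all j ∈ [n]^k with j_i = j'_i for every i ∈ {1,…,s} of ( C_j − Σ_{i=1}^k [p_i]_{j_i} ). -/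
/-- Observation used in the equivalence of `MIN` and `ARGMIN`: replacing the first
`s` weight vectors `p_i` by the vectors `q_i` (agreeing with `p_i` at index `j'_i`
and equal to `-M` elsewhere, for large enough `M`) turns the unconstrained
minimization into the minimization constrained to `j_i = j'_i` for `i ≤ s`. -/
theorem min_with_pinned_prefix (n k : ℕ) (hn : 0 < n) (hk : 0 < k)
    (C : (Fin k → Fin n) → ℝ) (p : Fin k → Fin n → ℝ)
    (M : ℝ)
    (hM : M = 2 * (⨆ j : Fin k → Fin n, |C j|) +
      2 * (∑ i : Fin k, ⨆ t : Fin n, |p i t|) + 1)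
    (s : ℕ) (hs : 1 ≤ s) (hsk : s ≤ k)
    (j' : Fin k → Fin n)
    (q : Fin k → Fin n → ℝ)
    (hq : ∀ i : Fin k, (i : ℕ) < s → ∀ t : Fin n,
      q i t = if t = j' i then p i t else -M) :
    sInf {v : ℝ | ∃ j : Fin k → Fin n,
        v = C j - ∑ i : Fin k, (if (i : ℕ) < s then q i (j i) else p i (j i))} =
    sInf {v : ℝ | ∃ j : Fin k → Fin n,
        (∀ i : Fin k, (i : ℕ) < s → j i = j' i) ∧
        v = C j - ∑ i : Fin k, p i (j i)} := by
  have hnN : Nonempty (Fin n) := ⟨⟨0, hn⟩⟩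
  have hjN : Nonempty (Fin k → Fin n) := ⟨fun _ => ⟨0, hn⟩⟩
  set A := ⨆ j : Fin k → Fin n, |C j| with hAdef
  set B := ∑ i : Fin k, ⨆ t : Fin n, |p i t| with hBdef
  have hCb : ∀ j, |C j| ≤ A := by
    intro j; rw [hAdef]
    exact le_ciSup (f := fun j => |C j|) (Set.finite_range _).bddAbove j
  have hPb : ∀ (i : Fin k) (t : Fin n), |p i t| ≤ ⨆ t, |p i t| :=
    fun i t => le_ciSup (f := fun t => |p i t|) (Set.finite_range _).bddAbove t
  have hA0 : 0 ≤ A := le_trans (abs_nonneg _) (hCb (Classical.arbitrary _))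
  have hPi0 : ∀ i : Fin k, 0 ≤ ⨆ t : Fin n, |p i t| := fun i =>
    le_trans (abs_nonneg _) (hPb i (Classical.arbitrary _))
  have hB0 : 0 ≤ B := Finset.sum_nonneg fun i _ => hPi0 i
  have hM0 : 0 ≤ M := by rw [hM]; nlinarith
  -- the two objective functions
  set f : (Fin k → Fin n) → ℝ := fun j =>
    C j - ∑ i : Fin k, (if (i : ℕ) < s then q i (j i) else p i (j i)) with hfdef
  set g : (Fin k → Fin n) → ℝ := fun j => C j - ∑ i : Fin k, p i (j i) with hgdef
  have hfg : ∀ j : Fin k → Fin n, (∀ i : Fin k, (i : ℕ) < s → j i = j' i) →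
      f j = g j := by
    intro j hpin
    simp only [hfdef, hgdef]
    congr 1
    refine Finset.sum_congr rfl fun i _ => ?_
    by_cases h : (i : ℕ) < s
    · rw [if_pos h, hq i h, if_pos (hpin i h)]
    · rw [if_neg h]
  -- bounds
  have hgub : ∀ j : Fin k → Fin n, g j ≤ A + B := by
    intro j
    have h1 : C j ≤ A := le_trans (le_abs_self _) (hCb j)
    have h2 : -B ≤ ∑ i : Fin k, p i (j i) := by
      rw [← Finset.sum_neg_distrib]
      refine Finset.sum_le_sum fun i _ => ?_
      exact le_trans (neg_le_neg (hPb i (j i))) (neg_abs_le _)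
    simp only [hgdef]
    linarith
  have S2ne : {v : ℝ | ∃ j : Fin k → Fin n,
      (∀ i : Fin k, (i : ℕ) < s → j i = j' i) ∧ v = g j}.Nonempty :=
    ⟨g j', j', fun _ _ => rfl, rfl⟩
  have S1bdd : BddBelow {v : ℝ | ∃ j : Fin k → Fin n, v = f j} := by
    have : {v : ℝ | ∃ j : Fin k → Fin n, v = f j} = Set.range f := by
      ext v; simp [eq_comm]
    rw [this]; exact (Set.finite_range f).bddBelow
  have S2bdd : BddBelow {v : ℝ | ∃ j : Fin k → Fin n,
      (∀ i : Fin k, (i : ℕ) < s → j i = j' i) ∧ v = g j} := by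
    have : {v : ℝ | ∃ j : Fin k → Fin n,
        (∀ i : Fin k, (i : ℕ) < s → j i = j' i) ∧ v = g j} ⊆ Set.range g := by
      rintro v ⟨j, _, rfl⟩; exact ⟨j, rfl⟩
    exact BddBelow.mono this (Set.finite_range g).bddBelow
  apply le_antisymm
  · -- constrained set is a subset (after identifying the values)
    apply csInf_le_csInf S1bdd S2ne
    rintro v ⟨j, hpin, rfl⟩
    exact ⟨j, (hfg j hpin).symm⟩
  · have S1ne : {v : ℝ | ∃ j : Fin k → Fin n,
        v = C j - ∑ i : Fin k, (if (i : ℕ) < s then q i (j i) else p i (j i))}.Nonempty :=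
      ⟨f (Classical.arbitrary _), Classical.arbitrary _, rfl⟩
    apply le_csInf S1ne
    rintro v ⟨j, rfl⟩
    show sInf _ ≤ f j
    by_cases hpin : ∀ i : Fin k, (i : ℕ) < s → j i = j' i
    · rw [hfg j hpin]
      exact csInf_le S2bdd ⟨j, hpin, rfl⟩
    · push_neg at hpin
      obtain ⟨i0, hi0s, hi0⟩ := hpin
      -- the pinned modification of j
      set jj : Fin k → Fin n := fun i => if (i : ℕ) < s then j' i else j i with hjj
      have hjjpin : ∀ i : Fin k, (i : ℕ) < s → jj i = j' i := fun i h => if_pos h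
      have hmem : g jj ∈ {v : ℝ | ∃ j : Fin k → Fin n,
          (∀ i : Fin k, (i : ℕ) < s → j i = j' i) ∧ v = g j} := ⟨jj, hjjpin, rfl⟩
      refine le_trans (csInf_le S2bdd hmem) ?_
      -- show g jj ≤ f j using the -M penalty at i0
      have hsum : ∑ i : Fin k, (if (i : ℕ) < s then q i (j i) else p i (j i))
          ≤ -M + B := by
        rw [← Finset.add_sum_erase Finset.univ _ (Finset.mem_univ i0)]
        have h1 : (if (i0 : ℕ) < s then q i0 (j i0) else p i0 (j i0)) = -M := by
          rw [if_pos hi0s, hq i0 hi0s, if_neg hi0]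
        rw [h1]
        have h2 : ∑ i ∈ Finset.univ.erase i0,
            (if (i : ℕ) < s then q i (j i) else p i (j i))
            ≤ ∑ i ∈ Finset.univ.erase i0, ⨆ t : Fin n, |p i t| := by
          refine Finset.sum_le_sum fun i _ => ?_
          by_cases h : (i : ℕ) < s
          · rw [if_pos h, hq i h]
            by_cases ht : j i = j' i
            · rw [if_pos ht]; exact le_trans (le_abs_self _) (hPb i _)
            · rw [if_neg ht]; exact le_trans (neg_nonpos_of_nonneg hM0) (hPi0 i)
          · rw [if_neg h]; exact le_trans (le_abs_self _) (hPb i _)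
        have h3 : ∑ i ∈ Finset.univ.erase i0, (⨆ t : Fin n, |p i t|) ≤ B := by
          rw [hBdef]
          exact Finset.sum_le_sum_of_subset_of_nonneg (Finset.erase_subset _ _)
            (fun i _ _ => hPi0 i)
        linarith
      have hCj : -A ≤ C j := le_trans (neg_le_neg (hCb j)) (neg_abs_le _)
      have hfl : -A + M - B ≤ f j := by
        simp only [hfdef]; linarith
      have := hgub jj
      rw [hM] at hfl
      linarith
end

section
/- Let n, k ≥ 1, let S ⊆ [n]^k be nonempty, let C : [n]^k → ℝ be given by C_j = 0 if j ∈ S and C_j = 1 if j ∉ S, let p_1, …, p_k ∈ ℝ^n, and let ε > 0. Define a := min_{j ∈ S} ( −Σ_{i=1}^k [p_i]_{j_i} ) and x := −Σ_{i=1}^k max_{t ∈ [n]} [p_i]_t, and let ã ∈ ℝ satisfy |ã − a| ≤ ε. Then the quantity defined as ã if ã ≤ x and as min(ã, 1 + x) if ã > x lies within additive error ε of min_{j ∈ [n]^k} ( C_j − Σ_{i=1}^k [p_i]_{j_i} ). -/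
/-- `AMIN` oracle for a set-optimization structured cost `C_j = 1[j ∉ S]`:
if `ã` is within additive error `ε` of `a = min_{j ∈ S} (-∑_i [p_i]_{j_i})`, then
the quantity (`ã` if `ã ≤ x`, else `min(ã, 1 + x)`) is within additive error `ε`
of `min_{j ∈ [n]^k} (C_j - ∑_i [p_i]_{j_i})`, where `x = -∑_i max_t [p_i]_t`. -/
theorem amin_oracle_set_optimization (n k : ℕ) (hn : 0 < n) (hk : 0 < k)
    (S : Finset (Fin k → Fin n)) (hS : S.Nonempty)
    (C : (Fin k → Fin n) → ℝ) (hC : ∀ j, C j = if j ∈ S then 0 else 1)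
    (p : Fin k → Fin n → ℝ)
    (ε : ℝ) (hε : 0 < ε)
    (a x : ℝ)
    (ha : a = S.inf' hS (fun j => -∑ i : Fin k, p i (j i)))
    (hx : x = -∑ i : Fin k,
      Finset.univ.sup' (Finset.univ_nonempty_iff.mpr ⟨⟨0, hn⟩⟩) (p i))
    (atil : ℝ) (hatil : |atil - a| ≤ ε) :
    |(if atil ≤ x then atil else min atil (1 + x)) -
        Finset.univ.inf' (Finset.univ_nonempty_iff.mpr ⟨fun _ => ⟨0, hn⟩⟩)
          (fun j : Fin k → Fin n => C j - ∑ i : Fin k, p i (j i))| ≤ ε := by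
  set ne1 : (Finset.univ : Finset (Fin n)).Nonempty :=
    Finset.univ_nonempty_iff.mpr ⟨⟨0, hn⟩⟩
  set ne2 : (Finset.univ : Finset (Fin k → Fin n)).Nonempty :=
    Finset.univ_nonempty_iff.mpr ⟨fun _ => ⟨0, hn⟩⟩
  set m := Finset.univ.inf' ne2 (fun j : Fin k → Fin n => C j - ∑ i : Fin k, p i (j i)) with hm
  -- x ≤ -∑ p i (j i) for every j
  have hxle : ∀ j : Fin k → Fin n, x ≤ -∑ i : Fin k, p i (j i) := by
    intro j
    rw [hx, neg_le_neg_iff]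
    exact Finset.sum_le_sum fun i _ => Finset.le_sup' (p i) (Finset.mem_univ (j i))
  -- m = min a (1 + x)
  have hmeq : m = min a (1 + x) := by
    apply le_antisymm
    · apply le_min
      · rw [ha]
        apply Finset.le_inf'
        intro j hj
        have := Finset.inf'_le (f := fun j : Fin k → Fin n => C j - ∑ i : Fin k, p i (j i))
          (Finset.mem_univ j)
        rw [hC j, if_pos hj, zero_sub] at this
        exact this
      · -- pick argmax tuple
        have hch : ∀ i : Fin k, ∃ t : Fin n,
            Finset.univ.sup' ne1 (p i) = p i t := by
          intro i
          obtain ⟨t, _, ht⟩ := Finset.exists_mem_eq_sup' ne1 (p i)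
          exact ⟨t, ht⟩
        choose t ht using hch
        have hle := Finset.inf'_le (f := fun j : Fin k → Fin n => C j - ∑ i : Fin k, p i (j i))
          (Finset.mem_univ t)
        have hsum : ∑ i : Fin k, p i (t i) = -x := by
          rw [hx, neg_neg]
          exact Finset.sum_congr rfl fun i _ => (ht i).symm
        have hCle : C t ≤ 1 := by rw [hC]; split <;> norm_num
        calc m ≤ C t - ∑ i : Fin k, p i (t i) := hle
          _ = C t + x := by rw [hsum]; ring
          _ ≤ 1 + x := by linarith
    · apply Finset.le_inf'
      intro j _
      rw [hC j]
      by_cases hj : j ∈ S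
      · simp only [hj, if_true]
        have : a ≤ -∑ i : Fin k, p i (j i) := by
          rw [ha]
          exact Finset.inf'_le _ hj
        calc min a (1 + x) ≤ a := min_le_left _ _
          _ ≤ 0 - ∑ i : Fin k, p i (j i) := by linarith
      · simp only [hj, if_false]
        have := hxle j
        calc min a (1 + x) ≤ 1 + x := min_le_right _ _
          _ ≤ 1 - ∑ i : Fin k, p i (j i) := by linarith
  rw [hmeq]
  have hax : x ≤ a := by
    rw [ha]
    exact Finset.le_inf' _ _ fun j _ => hxle j
  by_cases h : atil ≤ x
  · rw [if_pos h]
    have h1 : atil ≤ min a (1 + x) := le_min (by linarith) (by linarith)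
    have h2 : a - atil ≤ ε := by
      have := abs_le.mp hatil; linarith [this.1]
    rw [abs_sub_comm, abs_of_nonneg (by linarith)]
    have : min a (1 + x) ≤ a := min_le_left _ _
    linarith
  · rw [if_neg h]
    calc |min atil (1 + x) - min a (1 + x)| ≤ max |atil - a| |(1+x) - (1+x)| :=
          abs_min_sub_min_le_max _ _ _ _
      _ ≤ ε := by simpa using hatil
end

section
/- Let n, k, r ≥ 1, let u_{i,ℓ} ∈ ℝ^n for i ∈ {1,…,k} and ℓ ∈ {1,…,r}, and define R : [n]^k → ℝ by R_j = Σ_{ℓ=1}^r Π_{i=1}^k [u_{i,ℓ}]_{j_i}. Let R_max := max_{j ∈ [n]^k} |R_j|, let η > 0, let ε̃ > 0, and let q be a real polynomial of degree at most m such that |e^{−η x} − q(x)| ≤ ε̃ for all x ∈ [−R_max, R_max]. Define L : [n]^k → ℝ by L_j := q(R_j). Then: (i) max_{j ∈ [n]^k} |L_j − e^{−η R_j}| ≤ ε̃; and (ii) there exist N ≤ binom(r + m, r) and vectors v_{i,ℓ} ∈ ℝ^n for i ∈ {1,…,k}, ℓ ∈ {1,…,N}, such that L_j = Σ_{ℓ=1}^N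 Π_{i=1}^k [v_{i,ℓ}]_{j_i} for all j ∈ [n]^k. -/
/-!
Entrywise, `L_j = q(R_j) = ∑_{d ≤ m} q_d (∑_ℓ x_ℓ(j))^d` with `x_ℓ(j) = ∏_i [u_{i,ℓ}]_{j_i}`. The
multinomial theorem expands `(∑_ℓ x_ℓ)^d` as a sum over the multisets `s` of size `d` on `[r]` of
multiples of `∏_{ℓ ∈ s} x_ℓ`, and a product of rank-one tensors is rank one. Hence `L` is a sum of
as many rank-one tensors as there are multisets of size at most `m` on `[r]`, namely
`binom(r + m, r)`. The approximation bound holds because every `R_j` lies in `[-R_max, R_max]`.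
-/

open Finset

theorem Sym.card_sigma_fin_succ (α : Type*) [Fintype α] [DecidableEq α] (m : ℕ) :
    Fintype.card (Σ d : Fin (m + 1), Sym α d) = (Fintype.card α + m).choose (Fintype.card α) := by
  simp_rw [Fintype.card_sigma, Sym.card_sym_eq_multichoose]
  rw [Fin.sum_univ_eq_sum_range (fun d => (Fintype.card α).multichoose d),
    Nat.sum_range_multichoose, add_comm]

theorem Polynomial.eval_sum_eq_sum_sigma_sym {R κ : Type*} [CommSemiring R] [Fintype κ]
    [DecidableEq κ] {q : Polynomial R} {m : ℕ} (hq : q.natDegree ≤ m) (x : κ → R) :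
    q.eval (∑ ℓ, x ℓ) = ∑ t : Σ d : Fin (m + 1), Sym κ d,
      q.coeff t.1 * t.2.1.countPerms * (t.2.1.map x).prod := by
  rw [eval_eq_sum_range' (Nat.lt_succ_of_le hq),
    ← Fin.sum_univ_eq_sum_range (fun d => q.coeff d * _ ^ d), ← univ_sigma_univ, sum_sigma]
  refine sum_congr rfl fun d _ => ?_
  rw [sum_pow, sym_univ, mul_sum]
  exact sum_congr rfl fun α _ => (mul_assoc ..).symm

section Tensor

variable {ι α R : Type*} [Fintype ι]

variable (ι α R) in
def decomposableTensors [CommMonoid R] : Submonoid ((ι → α) → R) where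
  carrier := {L | ∃ w : ι → α → R, ∀ j, L j = ∏ i, w i (j i)}
  one_mem' := ⟨fun _ _ => 1, by simp⟩
  mul_mem' := by
    rintro L L' ⟨w, hw⟩ ⟨w', hw'⟩
    exact ⟨w * w', fun j => by simp [hw, hw', prod_mul_distrib]⟩

theorem const_mem_decomposableTensors [CommMonoid R] [Nonempty ι] (c : R) :
    (fun _ => c) ∈ decomposableTensors ι α R := by
  classical
  obtain ⟨i₀⟩ := ‹Nonempty ι›
  exact ⟨fun i _ => if i = i₀ then c else 1, fun j => by simp⟩

variable [CommSemiring R]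

def HasRankFactorization (L : (ι → α) → R) (N : ℕ) : Prop :=
  ∃ v : ι → Fin N → α → R, ∀ j, L j = ∑ ℓ, ∏ i, v i ℓ (j i)

theorem hasRankFactorization_of_eq_sum_decomposable {T : Type*} [Fintype T]
    {L : (ι → α) → R} {f : T → (ι → α) → R} (hf : ∀ t, f t ∈ decomposableTensors ι α R)
    (hL : L = ∑ t, f t) : HasRankFactorization L (Fintype.card T) := by
  choose w hw using hf
  let e := Fintype.equivFin T
  refine ⟨fun i ℓ => w (e.symm ℓ) i, fun j => ?_⟩
  rw [e.symm.sum_comp (fun t => ∏ i, w t i (j i)), hL, Finset.sum_apply]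
  exact sum_congr rfl fun t _ => hw t j

theorem HasRankFactorization.polynomial_eval [Nonempty ι] {L : (ι → α) → R} {r m : ℕ}
    (hL : HasRankFactorization L r) {q : Polynomial R} (hq : q.natDegree ≤ m) :
    HasRankFactorization (fun j => q.eval (L j)) ((r + m).choose r) := by
  obtain ⟨u, hu⟩ := hL
  let x : Fin r → (ι → α) → R := fun ℓ j => ∏ i, u i ℓ (j i)
  have hx : ∀ ℓ, x ℓ ∈ decomposableTensors ι α R := fun ℓ => ⟨fun i => u i ℓ, fun _ => rfl⟩
  have hcard := Sym.card_sigma_fin_succ (Fin r) m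
  rw [Fintype.card_fin] at hcard
  rw [← hcard]
  refine hasRankFactorization_of_eq_sum_decomposable
    (f := fun t => (fun _ => q.coeff t.1 * t.2.1.countPerms) * (t.2.1.map x).prod)
    (fun t => mul_mem (const_mem_decomposableTensors _)
      (Submonoid.multiset_prod_mem _ _ fun y hy => ?_)) ?_
  · obtain ⟨ℓ, -, rfl⟩ := Multiset.mem_map.mp hy
    exact hx ℓ
  · ext j
    simp only [hu, Finset.sum_apply, Pi.mul_apply, Pi.multiset_prod_apply, Multiset.map_map,
      Function.comp_def]
    exact Polynomial.eval_sum_eq_sum_sigma_sym hq (x · j)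

end Tensor

theorem lowrank_approx_of_exp_general (n k r : ℕ) (hk : 0 < k)
    (u : Fin k → Fin r → Fin n → ℝ)
    (R : (Fin k → Fin n) → ℝ)
    (hR : ∀ j, R j = ∑ ℓ : Fin r, ∏ i : Fin k, u i ℓ (j i))
    (Rmax : ℝ) (hRmax : Rmax = ⨆ j : Fin k → Fin n, |R j|)
    (η : ℝ) (εt : ℝ)
    (m : ℕ) (q : Polynomial ℝ) (hqdeg : q.natDegree ≤ m)
    (hq : ∀ x ∈ Set.Icc (-Rmax) Rmax, |Real.exp (-η * x) - q.eval x| ≤ εt)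
    (L : (Fin k → Fin n) → ℝ) (hL : ∀ j, L j = q.eval (R j)) :
    (∀ j : Fin k → Fin n, |L j - Real.exp (-η * R j)| ≤ εt) ∧
    ∃ N : ℕ, N ≤ Nat.choose (r + m) r ∧
      ∃ v : Fin k → Fin N → Fin n → ℝ,
        ∀ j : Fin k → Fin n, L j = ∑ ℓ : Fin N, ∏ i : Fin k, v i ℓ (j i) := by
  refine ⟨fun j => ?_, ?_⟩
  · have hRj : |R j| ≤ Rmax :=
      hRmax ▸ le_ciSup (f := fun j => |R j|) (Set.finite_range _).bddAbove j
    rw [hL, abs_sub_comm]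
    exact hq (R j) (abs_le.mp hRj)
  · have : Nonempty (Fin k) := ⟨⟨0, hk⟩⟩
    have hRfac : HasRankFactorization R r := ⟨u, hR⟩
    obtain ⟨v, hv⟩ := hRfac.polynomial_eval hqdeg
    exact ⟨_, le_rfl, v, fun j => (hL j).trans (hv j)⟩

/-- Low-rank approximation of the entrywise exponential of a rank-`r` tensor:
if `q` is a polynomial of degree at most `m` with `|e^{-ηx} - q(x)| ≤ ε̃` on
`[-R_max, R_max]`, then `L_j := q(R_j)` satisfies `|L_j - e^{-η R_j}| ≤ ε̃`
entrywise, and `L` admits a rank-`N` factorization with `N ≤ binom(r + m, r)`. -/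
theorem lowrank_approx_of_exp (n k r : ℕ) (hn : 0 < n) (hk : 0 < k) (hr : 0 < r)
    (u : Fin k → Fin r → Fin n → ℝ)
    (R : (Fin k → Fin n) → ℝ)
    (hR : ∀ j, R j = ∑ ℓ : Fin r, ∏ i : Fin k, u i ℓ (j i))
    (Rmax : ℝ) (hRmax : Rmax = ⨆ j : Fin k → Fin n, |R j|)
    (η : ℝ) (hη : 0 < η) (εt : ℝ) (hεt : 0 < εt)
    (m : ℕ) (q : Polynomial ℝ) (hqdeg : q.natDegree ≤ m)
    (hq : ∀ x ∈ Set.Icc (-Rmax) Rmax, |Real.exp (-η * x) - q.eval x| ≤ εt)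
    (L : (Fin k → Fin n) → ℝ) (hL : ∀ j, L j = q.eval (R j)) :
    (∀ j : Fin k → Fin n, |L j - Real.exp (-η * R j)| ≤ εt) ∧
    ∃ N : ℕ, N ≤ Nat.choose (r + m) r ∧
      ∃ v : Fin k → Fin N → Fin n → ℝ,
        ∀ j : Fin k → Fin n, L j = ∑ ℓ : Fin N, ∏ i : Fin k, v i ℓ (j i) :=
  lowrank_approx_of_exp_general n k r hk u R hR Rmax hRmax η εt m q hqdeg hq L hL
end

section
/- Let n, k ≥ 1, let 0 < ε ≤ 1, let η ≥ 1, let R : [n]^k → ℝ, and set R_max := max_{j ∈ [n]^k} |R_j|. Suppose L : [n]^k → ℝ satisfies max_{j ∈ [n]^k} |L_j − e^{−η R_j}| ≤ (ε/3) e^{−η R_max}. Then every entry of L satisfies L_j ≥ (2/3) e^{−η R_max} > 0, and the tensor R̃ defined by R̃_j := −η^{−1} log L_j satisfies max_{j ∈ [n]^k} |R̃_j − R_j| ≤ ε/2. -/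
lemma log_sub_le_of_le {m a b : ℝ} (hm : 0 < m) (ha : m ≤ a) (hab : a ≤ b) :
    Real.log b - Real.log a ≤ (b - a) / m := by
  have ha0 : 0 < a := lt_of_lt_of_le hm ha
  have hb0 : 0 < b := lt_of_lt_of_le ha0 hab
  have h1 : Real.log b - Real.log a = Real.log (b / a) := by
    rw [Real.log_div (ne_of_gt hb0) (ne_of_gt ha0)]
  have h2 : Real.log (b / a) ≤ b / a - 1 :=
    Real.log_le_sub_one_of_pos (div_pos hb0 ha0)
  have h3 : b / a - 1 = (b - a) / a := by field_simp
  have h4 : (b - a) / a ≤ (b - a) / m :=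
    div_le_div_of_nonneg_left (by linarith) hm ha
  linarith
lemma abs_log_sub_le {m a b : ℝ} (hm : 0 < m) (ha : m ≤ a) (hb : m ≤ b) :
    |Real.log a - Real.log b| ≤ |a - b| / m := by
  rcases le_total a b with h | h
  · rw [abs_sub_comm (Real.log a), abs_sub_comm a b]
    rw [abs_of_nonneg (by linarith : (0:ℝ) ≤ b - a)]
    rw [abs_of_nonneg (by
      have := Real.log_le_log (lt_of_lt_of_le hm ha) h
      linarith)]
    exact log_sub_le_of_le hm ha h
  · rw [abs_of_nonneg (by linarith : (0:ℝ) ≤ a - b)]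
    rw [abs_of_nonneg (by
      have := Real.log_le_log (lt_of_lt_of_le hm hb) h
      linarith)]
    exact log_sub_le_of_le hm hb h

/-- Precision of the low-rank approximation: if `L` approximates `exp[-η R]`
entrywise to error `(ε/3) e^{-η R_max}`, then every entry of `L` is at least
`(2/3) e^{-η R_max} > 0`, and `R̃ := -η⁻¹ log[L]` satisfies
`max_j |R̃_j - R_j| ≤ ε/2`. -/
theorem precision_of_lowrank_approx (n k : ℕ) (hn : 0 < n) (hk : 0 < k)
    (ε η : ℝ) (hε0 : 0 < ε) (hε1 : ε ≤ 1) (hη : 1 ≤ η)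
    (R L : (Fin k → Fin n) → ℝ)
    (Rmax : ℝ) (hRmax : Rmax = ⨆ j : Fin k → Fin n, |R j|)
    (hL : ∀ j : Fin k → Fin n,
      |L j - Real.exp (-η * R j)| ≤ (ε / 3) * Real.exp (-η * Rmax)) :
    (∀ j : Fin k → Fin n, (2 / 3) * Real.exp (-η * Rmax) ≤ L j) ∧
    (0 < (2 / 3) * Real.exp (-η * Rmax)) ∧
    (∀ j : Fin k → Fin n, |(-η⁻¹ * Real.log (L j)) - R j| ≤ ε / 2) := by
  haveI : NeZero n := ⟨hn.ne'⟩
  have hη0 : 0 < η := lt_of_lt_of_le one_pos hη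
  have hRle : ∀ j : Fin k → Fin n, |R j| ≤ Rmax := by
    intro j
    rw [hRmax]
    exact le_ciSup (f := fun j : Fin k → Fin n => |R j|) (Set.Finite.bddAbove (Set.finite_range _)) j
  have hexp : ∀ j : Fin k → Fin n,
      Real.exp (-η * Rmax) ≤ Real.exp (-η * R j) := by
    intro j
    apply Real.exp_le_exp.mpr
    have h := hRle j
    nlinarith [le_abs_self (R j), hη0.le]
  have hE : 0 < Real.exp (-η * Rmax) := Real.exp_pos _
  have hLge : ∀ j : Fin k → Fin n, (2 / 3) * Real.exp (-η * Rmax) ≤ L j := by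
    intro j
    have h1 := hL j
    have h2 := hexp j
    have := abs_le.mp h1
    nlinarith
  refine ⟨hLge, by positivity, fun j => ?_⟩
  have hm : (0:ℝ) < (2 / 3) * Real.exp (-η * Rmax) := by positivity
  have hmL := hLge j
  have hmE : (2 / 3) * Real.exp (-η * Rmax) ≤ Real.exp (-η * R j) := by
    have := hexp j; linarith
  have hlog : |Real.log (L j) - Real.log (Real.exp (-η * R j))|
      ≤ |L j - Real.exp (-η * R j)| / ((2 / 3) * Real.exp (-η * Rmax)) :=
    abs_log_sub_le hm hmL hmE
  rw [Real.log_exp] at hlog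
  have hdiv : |L j - Real.exp (-η * R j)| / ((2 / 3) * Real.exp (-η * Rmax))
      ≤ ε / 2 := by
    rw [div_le_iff₀ hm]
    have := hL j
    nlinarith
  have hkey : |Real.log (L j) - (-η * R j)| ≤ ε / 2 := le_trans hlog hdiv
  have heq : (-η⁻¹ * Real.log (L j)) - R j
      = -η⁻¹ * (Real.log (L j) - (-η * R j)) := by
    field_simp
    ring
  rw [heq, abs_mul, abs_neg, abs_inv, abs_of_pos hη0]
  have hinv : η⁻¹ ≤ 1 := inv_le_one_of_one_le₀ hη
  have habs := abs_nonneg (Real.log (L j) - (-η * R j))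
  calc η⁻¹ * |Real.log (L j) - (-η * R j)| ≤ 1 * |Real.log (L j) - (-η * R j)| := by
        apply mul_le_mul_of_nonneg_right hinv habs
    _ ≤ ε / 2 := by rw [one_mul]; exact hkey
end

section
/- Let n, k ≥ 1, let μ_1, …, μ_k ∈ Δ_n have all entries strictly positive, let C : [n]^k → ℝ have nonnegative entries, let λ > 0, and let P : [n]^k → ℝ be entrywise nonnegative. Suppose there exists P* ∈ M(μ_1,…,μ_k) with ⟨C, P*⟩ ≤ λ. Then there exists j ∈ [n]^k such that (C_j/λ) · exp(⟨C, P⟩/λ) + Σ_{i=1}^k (1/[μ_i]_{j_i}) · exp( [m_i(P)]_{j_i} / [μ_i]_{j_i} ) ≤ exp(⟨C, P⟩/λ) + Σ_{s=1}^k Σ_{t=1}^n exp( [m_s(P)]_t / [μ_s]_t ). -/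
/-- MWU bottleneck feasibility (Lemma 3 of Young): if some `P* ∈ M(μ_1,…,μ_k)`
has cost `⟨C, P*⟩ ≤ λ`, then there exists a tuple `j` whose potential-derivative
numerator is at most the potential denominator, i.e.
`(C_j/λ) e^{⟨C,P⟩/λ} + ∑_i (1/[μ_i]_{j_i}) e^{[m_i(P)]_{j_i}/[μ_i]_{j_i}}
  ≤ e^{⟨C,P⟩/λ} + ∑_s ∑_t e^{[m_s(P)]_t/[μ_s]_t}`. -/
theorem mwu_bottleneck_exists (n k : ℕ) (hn : 0 < n) (hk : 0 < k)
    (μ : Fin k → Fin n → ℝ)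
    (hμpos : ∀ (i : Fin k) (t : Fin n), 0 < μ i t)
    (hμsum : ∀ i : Fin k, ∑ t : Fin n, μ i t = 1)
    (C : (Fin k → Fin n) → ℝ) (hC : ∀ j, 0 ≤ C j)
    (lam : ℝ) (hlam : 0 < lam)
    (P : (Fin k → Fin n) → ℝ) (hP : ∀ j, 0 ≤ P j)
    (Pstar : (Fin k → Fin n) → ℝ)
    (hPstar_nonneg : ∀ j, 0 ≤ Pstar j)
    (hPstar_marg : ∀ (i : Fin k) (t : Fin n),
      ∑ j ∈ Finset.univ.filter (fun j : Fin k → Fin n => j i = t), Pstar j = μ i t)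
    (hcost : ∑ j : Fin k → Fin n, C j * Pstar j ≤ lam) :
    ∃ j : Fin k → Fin n,
      (C j / lam) * Real.exp ((∑ j' : Fin k → Fin n, C j' * P j') / lam) +
        ∑ i : Fin k, (1 / μ i (j i)) *
          Real.exp ((∑ j' ∈ Finset.univ.filter
            (fun j' : Fin k → Fin n => j' i = j i), P j') / μ i (j i)) ≤
      Real.exp ((∑ j' : Fin k → Fin n, C j' * P j') / lam) +
        ∑ s : Fin k, ∑ t : Fin n,
          Real.exp ((∑ j' ∈ Finset.univ.filter
            (fun j' : Fin k → Fin n => j' s = t), P j') / μ s t) := by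
  classical
  set E : ℝ := Real.exp ((∑ j' : Fin k → Fin n, C j' * P j') / lam) with hEdef
  set G : Fin k → Fin n → ℝ := fun s t =>
    Real.exp ((∑ j' ∈ Finset.univ.filter
      (fun j' : Fin k → Fin n => j' s = t), P j') / μ s t) with hGdef
  set L : (Fin k → Fin n) → ℝ := fun j =>
    (C j / lam) * E + ∑ i : Fin k, (1 / μ i (j i)) * G i (j i) with hLdef
  set R : ℝ := E + ∑ s : Fin k, ∑ t : Fin n, G s t with hRdef
  -- total mass of Pstar is 1
  have i0 : Fin k := ⟨0, hk⟩
  have hsum1 : ∑ j : Fin k → Fin n, Pstar j = 1 := by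
    have h1 := Finset.sum_fiberwise Finset.univ (fun j : Fin k → Fin n => j i0) Pstar
    rw [← h1]
    simp only [hPstar_marg i0]
    exact hμsum i0
  -- weighted average bound
  have key : ∑ j : Fin k → Fin n, Pstar j * L j ≤ R := by
    have split : ∑ j : Fin k → Fin n, Pstar j * L j =
        (∑ j : Fin k → Fin n, C j * Pstar j) * (E / lam) +
        ∑ i : Fin k, ∑ j : Fin k → Fin n, Pstar j * ((1 / μ i (j i)) * G i (j i)) := by
      simp only [hLdef, mul_add, Finset.sum_add_distrib, Finset.mul_sum]
      congr 1
      · rw [Finset.sum_mul]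
        exact Finset.sum_congr rfl fun j _ => by ring
      · exact Finset.sum_comm
    have hinner : ∀ i : Fin k,
        ∑ j : Fin k → Fin n, Pstar j * ((1 / μ i (j i)) * G i (j i)) = ∑ t : Fin n, G i t := by
      intro i
      have h1 := Finset.sum_fiberwise Finset.univ (fun j : Fin k → Fin n => j i)
        (fun j => Pstar j * ((1 / μ i (j i)) * G i (j i)))
      rw [← h1]
      apply Finset.sum_congr rfl
      intro t _
      have : ∑ j ∈ Finset.univ.filter (fun j : Fin k → Fin n => j i = t),
          Pstar j * ((1 / μ i (j i)) * G i (j i)) =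
          ∑ j ∈ Finset.univ.filter (fun j : Fin k → Fin n => j i = t),
          Pstar j * ((1 / μ i t) * G i t) := by
        apply Finset.sum_congr rfl
        intro j hj
        rw [(Finset.mem_filter.1 hj).2]
      rw [this, ← Finset.sum_mul, hPstar_marg i t, one_div, ← mul_assoc,
        mul_inv_cancel₀ (hμpos i t).ne', one_mul]
    rw [split]
    have hfirst : (∑ j : Fin k → Fin n, C j * Pstar j) * (E / lam) ≤ E := by
      calc (∑ j : Fin k → Fin n, C j * Pstar j) * (E / lam)
          ≤ lam * (E / lam) := by
            apply mul_le_mul_of_nonneg_right hcost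
            positivity
        _ = E := by field_simp
    rw [hRdef]
    gcongr
    apply le_of_eq
    exact hinner _
  by_contra h
  push_neg at h
  -- h : ∀ j, R < L j
  have hex : ∃ j : Fin k → Fin n, 0 < Pstar j := by
    by_contra hno
    push_neg at hno
    have : ∑ j : Fin k → Fin n, Pstar j = 0 := by
      apply Finset.sum_eq_zero
      intro j _
      exact le_antisymm (hno j) (hPstar_nonneg j)
    rw [hsum1] at this; norm_num at this
  obtain ⟨j0, hj0⟩ := hex
  have hlt : ∑ j : Fin k → Fin n, Pstar j * R < ∑ j : Fin k → Fin n, Pstar j * L j := by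
    apply Finset.sum_lt_sum
    · intro j _
      exact mul_le_mul_of_nonneg_left (h j).le (hPstar_nonneg j)
    · exact ⟨j0, Finset.mem_univ _, by
        exact (mul_lt_mul_iff_right₀ hj0).2 (h j0)⟩
  rw [← Finset.sum_mul, hsum1, one_mul] at hlt
  exact absurd key (not_le.2 hlt)
end
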